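/- arXiv:1703.08298 — 2 statements merged into one kernel-verified Lean document; each statement's English description precedes it below -/
import Mathlib

section
/- For n ≥ 2 and any n×n matrices A, B, C over a commutative ring, (n−1)³ · ∑_{1≤i,j,k≤n} aᵢⱼbⱼₖcₖᵢ = ∑_{1≤p,q,r≤n} ∑_{1≤i,j,k≤n} (Π_q A Π_r)ᵢⱼ (Π_r B Π_p)ⱼₖ (Π_p C Π_q)ₖᵢ, where Π_m denotes the identity matrix with the m-th diagonal entry replaced by 0. -/
open Matrix

/-- `Π m` : the identity matrix with the `m`-th diagonal entry replaced by `0`. -/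
def diagZero {R : Type*} [CommRing R] (n : ℕ) (m : Fin n) : Matrix (Fin n) (Fin n) R :=
  1 - Matrix.single m m 1

theorem diagZero_eq {R : Type*} [CommRing R] (n : ℕ) (m : Fin n) :
    diagZero n m = Matrix.diagonal (fun i => if i = m then (0:R) else 1) := by
  ext i j
  simp only [diagZero, Matrix.sub_apply, Matrix.one_apply, Matrix.single,
    Matrix.diagonal, Matrix.of_apply]
  split_ifs with h1 h2 h3 h4 h5 <;> try ring
  · exact absurd h2.1.symm h3
  · subst h1; exact absurd ⟨h4.symm, h4.symm⟩ h2
  · obtain ⟨ha, hb⟩ := h5; exact absurd (ha.symm.trans hb) h1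

theorem ind_sum {R : Type*} [CommRing R] (n : ℕ) (hn : 2 ≤ n) (x : Fin n) :
    ∑ m : Fin n, (if x = m then (0:R) else 1) = ((n - 1 : ℕ) : R) := by
  have h : ∀ m : Fin n, (if x = m then (0:R) else 1) = 1 - (if x = m then 1 else 0) := by
    intro m; split_ifs <;> ring
  simp only [h, Finset.sum_sub_distrib, Finset.sum_const, Finset.card_univ, Fintype.card_fin,
    Finset.sum_ite_eq, Finset.mem_univ, if_true, nsmul_eq_mul, mul_one]
  rw [Nat.cast_sub (by omega), Nat.cast_one]

theorem sum_swap6 {R : Type*} [AddCommMonoid R] {n : ℕ}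
    (f : Fin n → Fin n → Fin n → Fin n → Fin n → Fin n → R) :
    (∑ p, ∑ q, ∑ r, ∑ i, ∑ j, ∑ k, f p q r i j k)
      = ∑ i, ∑ j, ∑ k, ∑ p, ∑ q, ∑ r, f p q r i j k := by
  conv_lhs => enter [2, p, 2, q]; rw [Finset.sum_comm]
  conv_lhs => enter [2, p]; rw [Finset.sum_comm]
  rw [Finset.sum_comm]
  conv_lhs => enter [2, i, 2, p, 2, q]; rw [Finset.sum_comm]
  conv_lhs => enter [2, i, 2, p]; rw [Finset.sum_comm]
  conv_lhs => enter [2, i]; rw [Finset.sum_comm]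
  conv_lhs => enter [2, i, 2, j, 2, p, 2, q]; rw [Finset.sum_comm]
  conv_lhs => enter [2, i, 2, j, 2, p]; rw [Finset.sum_comm]
  conv_lhs => enter [2, i, 2, j]; rw [Finset.sum_comm]

/-- For `n ≥ 2` and n×n matrices `A B C`,
`(n-1)³ ∑ᵢⱼₖ aᵢⱼbⱼₖcₖᵢ = ∑ₚqᵣ ∑ᵢⱼₖ (Π_q A Π_r)ᵢⱼ (Π_r B Π_p)ⱼₖ (Π_p C Π_q)ₖᵢ`. -/
theorem zeroed_sum_identity {R : Type*} [CommRing R] (n : ℕ) (hn : 2 ≤ n)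
    (A B C : Matrix (Fin n) (Fin n) R) :
    (((n - 1) ^ 3 : ℕ) : R) * (∑ i, ∑ j, ∑ k, A i j * B j k * C k i) =
      ∑ p : Fin n, ∑ q : Fin n, ∑ r : Fin n, ∑ i : Fin n, ∑ j : Fin n, ∑ k : Fin n,
        (diagZero n q * A * diagZero n r : Matrix (Fin n) (Fin n) R) i j *
        (diagZero n r * B * diagZero n p : Matrix (Fin n) (Fin n) R) j k *
        (diagZero n p * C * diagZero n q : Matrix (Fin n) (Fin n) R) k i := by
  set g : Fin n → Fin n → R := fun m x => if x = m then 0 else 1 with hg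
  have hsq : ∀ m x, g m x * g m x = g m x := by
    intro m x; simp only [hg]; split_ifs <;> ring
  have hsum : ∀ x, ∑ m, g m x = ((n - 1 : ℕ) : R) := fun x => ind_sum n hn x
  have hentry : ∀ (M : Matrix (Fin n) (Fin n) R) (q r i j : Fin n),
      (diagZero n q * M * diagZero n r : Matrix (Fin n) (Fin n) R) i j = g q i * M i j * g r j := by
    intro M q r i j
    rw [diagZero_eq, diagZero_eq, Matrix.mul_diagonal, Matrix.diagonal_mul]
  simp only [hentry]
  rw [sum_swap6 (fun p q r i j k =>
      g q i * A i j * g r j * (g r j * B j k * g p k) * (g p k * C k i * g q i))]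
  rw [Finset.mul_sum]
  refine Finset.sum_congr rfl fun i _ => ?_
  rw [Finset.mul_sum]
  refine Finset.sum_congr rfl fun j _ => ?_
  rw [Finset.mul_sum]
  refine Finset.sum_congr rfl fun k _ => ?_
  -- goal: N3 * (A i j * B j k * C k i) = ∑ p, ∑ q, ∑ r, term
  have step : ∀ p q r : Fin n,
      g q i * A i j * g r j * (g r j * B j k * g p k) * (g p k * C k i * g q i)
        = g p k * (g q i * (g r j * (A i j * B j k * C k i))) := by
    intro p q r
    calc g q i * A i j * g r j * (g r j * B j k * g p k) * (g p k * C k i * g q i)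
        = (g q i * g q i) * ((g r j * g r j) * ((g p k * g p k)
            * (A i j * B j k * C k i))) := by ring
      _ = g p k * (g q i * (g r j * (A i j * B j k * C k i))) := by
          rw [hsq, hsq, hsq]; ring
  simp only [step]
  simp only [← Finset.mul_sum, ← Finset.sum_mul]
  rw [hsum, hsum, hsum]
  push_cast [Nat.cast_sub (by omega : 1 ≤ n)]
  ring
end

section
/- Decomposition of the classical 3×3 matrix multiplication tensor by the Klein four-group: M = ∑_{g∈K} g·(e₁₁⊗e₁₁⊗e₁₁) + ∑_{g∈K} g·(Z(M)) − R, where Z(M) is M with all rank-one summands involving index 1 in the appropriate slot removed (i.e., ∑_{2≤i,j,k≤3} e_{ij}⊗e_{jk}⊗e_{ki}), and R = (1/2)∑_{g∈K} g·(e₂₃⊗e₃₃⊗e₃₂) + (1/2)∑_{g∈K} g·(e₃₃⊗e₃₂⊗e₂₃) + (1/2)∑_{g∈K} g·(e₃₂⊗e₂₃⊗e₃₃) + 3∑_{g∈K} g·(e₃₃⊗e₃₃⊗e₃₃). -/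
open Matrix TensorProduct

variable {K : Type*} [Field K]

abbrev M3 (K : Type*) [Field K] := Matrix (Fin 3) (Fin 3) K

/-- The linear map `X ↦ P * X * Q` on matrices. -/
def conjMap (P Q : M3 K) : M3 K →ₗ[K] M3 K where
  toFun X := P * X * Q
  map_add' X Y := by simp [Matrix.mul_add, Matrix.add_mul]
  map_smul' c X := by simp [Matrix.mul_smul, Matrix.smul_mul]

/-- Sandwiching by `(G₁,G₂,G₃)`, extended linearly. -/
noncomputable def sandwich (G₁ G₂ G₃ : M3 K) :
    M3 K ⊗[K] (M3 K ⊗[K] M3 K) →ₗ[K] M3 K ⊗[K] (M3 K ⊗[K] M3 K) :=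
  TensorProduct.map (conjMap (G₁⁻¹)ᵀ G₂ᵀ)
    (TensorProduct.map (conjMap (G₂⁻¹)ᵀ G₃ᵀ) (conjMap (G₃⁻¹)ᵀ G₁ᵀ))

/-- The 3×3 permutation matrix of the transposition (1 2). -/
def P12 (K : Type*) [Field K] : M3 K := !![0,1,0; 1,0,0; 0,0,1]

/-- The Klein four-group `𝒦 = {(I,I,I),(I,P,P),(P,P,I),(P,I,P)}` of isotropies. -/
def kleinK (K : Type*) [Field K] : List (M3 K × M3 K × M3 K) :=
  [(1, 1, 1), (1, P12 K, P12 K), (P12 K, P12 K, 1), (P12 K, 1, P12 K)]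

/-- Sum of a tensor's images under the Klein four-group (sandwiching). -/
noncomputable def orbitSum (x : M3 K ⊗[K] (M3 K ⊗[K] M3 K)) :
    M3 K ⊗[K] (M3 K ⊗[K] M3 K) :=
  ((kleinK K).map fun g => sandwich g.1 g.2.1 g.2.2 x).sum

/-- Rank-one tensor `u ⊗ v ⊗ w` from matrix units. -/
noncomputable def eT (i j p q k r : Fin 3) : M3 K ⊗[K] (M3 K ⊗[K] M3 K) :=
  Matrix.single i j (1 : K) ⊗ₜ[K]
    (Matrix.single p q (1 : K) ⊗ₜ[K] Matrix.single k r (1 : K))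

def sw : Fin 3 → Fin 3 := ![1,0,2]

lemma P12_mul_self : P12 K * P12 K = 1 := by
  ext a b
  fin_cases a <;> fin_cases b <;>
    simp [P12, Matrix.mul_apply, Fin.sum_univ_three, Matrix.vecHead, Matrix.vecTail]

lemma P12_inv : (P12 K)⁻¹ = P12 K := Matrix.inv_eq_left_inv P12_mul_self

lemma P12_transpose : (P12 K)ᵀ = P12 K := by
  ext a b
  fin_cases a <;> fin_cases b <;> simp [P12, Matrix.vecHead, Matrix.vecTail]

lemma one_inv_m3 : ((1 : M3 K)⁻¹) = 1 := by
  rw [Matrix.inv_eq_left_inv (by simp : (1:M3 K) * 1 = 1)]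

lemma P12_mul_std (i j : Fin 3) :
    P12 K * Matrix.single i j (1:K) = Matrix.single (sw i) j 1 := by
  fin_cases i <;> fin_cases j <;>
    · ext a b
      fin_cases a <;> fin_cases b <;>
        simp [P12, sw, Matrix.mul_apply, Fin.sum_univ_three, Matrix.single,
          Matrix.vecHead, Matrix.vecTail]

lemma std_mul_P12 (i j : Fin 3) :
    Matrix.single i j (1:K) * P12 K = Matrix.single i (sw j) 1 := by
  fin_cases i <;> fin_cases j <;>
    · ext a b
      fin_cases a <;> fin_cases b <;>
        simp [P12, sw, Matrix.mul_apply, Fin.sum_univ_three, Matrix.single,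
          Matrix.vecHead, Matrix.vecTail]

lemma conj_one (i j : Fin 3) :
    conjMap (1 : M3 K) 1 (Matrix.single i j (1:K)) = Matrix.single i j 1 := by
  simp [conjMap]

lemma conj_PP (i j : Fin 3) :
    conjMap (P12 K) (P12 K) (Matrix.single i j (1:K)) = Matrix.single (sw i) (sw j) 1 := by
  show P12 K * Matrix.single i j (1:K) * P12 K = _
  rw [P12_mul_std, std_mul_P12]

lemma conj_P1 (i j : Fin 3) :
    conjMap (P12 K) 1 (Matrix.single i j (1:K)) = Matrix.single (sw i) j 1 := by
  show P12 K * Matrix.single i j (1:K) * 1 = _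
  rw [P12_mul_std, mul_one]

lemma conj_1P (i j : Fin 3) :
    conjMap 1 (P12 K) (Matrix.single i j (1:K)) = Matrix.single i (sw j) 1 := by
  show 1 * Matrix.single i j (1:K) * P12 K = _
  rw [one_mul, std_mul_P12]

lemma orbitSum_eT (i j p q k r : Fin 3) :
    orbitSum (eT i j p q k r : M3 K ⊗[K] (M3 K ⊗[K] M3 K)) =
      eT i j p q k r + eT i (sw j) (sw p) (sw q) (sw k) r
        + eT (sw i) (sw j) (sw p) q k (sw r)
        + eT (sw i) j p (sw q) (sw k) (sw r) := by
  simp only [orbitSum, kleinK, List.map_cons, List.map_nil, List.sum_cons, List.sum_nil,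
    add_zero, sandwich, eT, map_tmul, P12_inv, P12_transpose, one_inv_m3,
    Matrix.transpose_one, conj_one, conj_PP, conj_P1, conj_1P]
  abel

lemma orbitSum_add (x y : M3 K ⊗[K] (M3 K ⊗[K] M3 K)) :
    orbitSum (x + y) = orbitSum x + orbitSum y := by
  simp only [orbitSum, kleinK, List.map_cons, List.map_nil, List.sum_cons, List.sum_nil,
    add_zero, map_add]
  abel

lemma succ0 : (0 : Fin 2).succ = (1 : Fin 3) := rfl
lemma succ1 : (1 : Fin 2).succ = (2 : Fin 3) := rfl
lemma sw0 : sw 0 = 1 := rfl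
lemma sw1 : sw 1 = 0 := rfl
lemma sw2 : sw 2 = 2 := rfl


set_option synthInstance.maxHeartbeats 1000000
set_option maxHeartbeats 2000000

/-- Decomposition of the classical 3×3 matrix multiplication tensor `M` by the
Klein four-group:
`M = ∑_{g∈K} g·(e₁₁⊗e₁₁⊗e₁₁) + ∑_{g∈K} g·Z₁,₁,₁(M) − R`, with
`Z₁,₁,₁(M) = ∑_{2≤i,j,k≤3} e_{ij}⊗e_{jk}⊗e_{ki}` and
`R = (1/2)∑_g g·(e₂₃⊗e₃₃⊗e₃₂) + (1/2)∑_g g·(e₃₃⊗e₃₂⊗e₂₃) + (1/2)∑_g g·(e₃₂⊗e₂₃⊗e₃₃)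
     + 3·(orbit of e₃₃⊗e₃₃⊗e₃₃)`;
since `e₃₃⊗e₃₃⊗e₃₃` is a fixed point of `K`, its (normalized) orbit sum is
`(1/4)∑_{g∈K} g·(e₃₃⊗e₃₃⊗e₃₃)`. (Indices 0-based: `eᵢⱼ` is `Matrix.single (i-1) (j-1)`.) -/
theorem klein_four_decomposition_of_mmTensor (h2 : (2 : K) ≠ 0) :
    (∑ i : Fin 3, ∑ j : Fin 3, ∑ k : Fin 3,
        (eT i j j k k i : M3 K ⊗[K] (M3 K ⊗[K] M3 K)))
      = orbitSum (eT 0 0 0 0 0 0)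
        + orbitSum (∑ i : Fin 2, ∑ j : Fin 2, ∑ k : Fin 2,
            (eT i.succ j.succ j.succ k.succ k.succ i.succ : M3 K ⊗[K] (M3 K ⊗[K] M3 K)))
        - ((1/2 : K) • orbitSum (eT 1 2 2 2 2 1)
            + (1/2 : K) • orbitSum (eT 2 2 2 1 1 2)
            + (1/2 : K) • orbitSum (eT 2 1 1 2 2 2)
            + (3 : K) • ((1/4 : K) • orbitSum (eT 2 2 2 2 2 2))) := by
  simp only [Fin.sum_univ_three, Fin.sum_univ_two, succ0, succ1, orbitSum_add,
    orbitSum_eT, sw0, sw1, sw2]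
  have h4 : (4 : K) ≠ 0 := by
    have := mul_ne_zero h2 h2
    norm_num at this ⊢
    exact this
  match_scalars <;> (field_simp [h4]; try ring)
end
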